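/- For |t| sufficiently large (e.g. |t| > 8), the logarithmic Mahler measure of F_t(x,y) = (x+y)(y+1)(1+x) − t·xy admits the convergent expansion m(F_t) = log|t| − ∑_{k≥1} (1/k) a_k t^{-k}, where a_k is the constant term of the Laurent polynomial ((x+y)(y+1)(1+x)(xy)^{-1})^k. -/

import Mathlib

open Complex MeasureTheory intervalIntegral Real

noncomputable def e (s : ℝ) : ℂ := Complex.exp (2 * Real.pi * Complex.I * s)

lemma e_ne_zero (s : ℝ) : e s ≠ 0 := Complex.exp_ne_zero _

lemma abs_e (s : ℝ) : ‖e s‖ = 1 := by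
  rw [e, Complex.norm_exp]
  have : (2 * (Real.pi:ℂ) * Complex.I * (s:ℂ)).re = 0 := by
    simp [Complex.mul_re, Complex.mul_im]
  rw [this, Real.exp_zero]

@[fun_prop] lemma continuous_e : Continuous e := by
  unfold e; fun_prop

noncomputable def logMahler (f : ℂ → ℂ → ℂ) : ℝ :=
  ∫ s in (0:ℝ)..1, ∫ t in (0:ℝ)..1, Real.log (‖f (e s) (e t)‖)

noncomputable def uc (s : ℝ) : ℂˣ := Units.mk0 (e s) (e_ne_zero s)

@[simp] lemma uc_coe (s : ℝ) : ((uc s : ℂˣ) : ℂ) = e s := rfl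

noncomputable def evHom (x y : ℂˣ) : Multiplicative (ℤ × ℤ) →* ℂˣ where
  toFun m := x ^ (Multiplicative.toAdd m).1 * y ^ (Multiplicative.toAdd m).2
  map_one' := by simp
  map_mul' a b := by
    show x ^ ((Multiplicative.toAdd a).1 + (Multiplicative.toAdd b).1) *
        y ^ ((Multiplicative.toAdd a).2 + (Multiplicative.toAdd b).2) = _
    rw [zpow_add, zpow_add]
    exact mul_mul_mul_comm _ _ _ _

noncomputable def ev (x y : ℂˣ) : AddMonoidAlgebra ℂ (ℤ × ℤ) →ₐ[ℂ] ℂ :=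
  AddMonoidAlgebra.lift ℂ ℂ (ℤ × ℤ) ((Units.coeHom ℂ).comp (evHom x y))

lemma ev_single (x y : ℂˣ) (a : ℤ × ℤ) (c : ℂ) :
    ev x y (AddMonoidAlgebra.single a c) = c * (x:ℂ) ^ a.1 * (y:ℂ) ^ a.2 := by
  simp only [ev, AddMonoidAlgebra.lift_single, MonoidHom.coe_comp, Function.comp_apply,
    Units.coeHom_apply, evHom, MonoidHom.coe_mk, OneHom.coe_mk, smul_eq_mul]
  push_cast
  ring_nf
  congr 1

noncomputable def Gpoly : AddMonoidAlgebra ℂ (ℤ × ℤ) :=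
  (AddMonoidAlgebra.single (1, 0) 1 + AddMonoidAlgebra.single (0, 1) 1) *
      (AddMonoidAlgebra.single (0, 1) 1 + 1) *
      (1 + AddMonoidAlgebra.single (1, 0) 1) *
    AddMonoidAlgebra.single (-1, -1) 1

lemma ev_Gpoly (x y : ℂˣ) :
    ev x y Gpoly = ((x:ℂ) + (y:ℂ)) * ((y:ℂ) + 1) * (1 + (x:ℂ)) * ((x:ℂ) * (y:ℂ))⁻¹ := by
  simp only [Gpoly, map_mul, map_add, map_one, ev_single]
  simp only [zpow_one, zpow_zero, zpow_neg, mul_one, one_mul, mul_inv]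

lemma abs_ev_Gpoly_le (s τ : ℝ) : ‖ev (uc s) (uc τ) Gpoly‖ ≤ 8 := by
  rw [ev_Gpoly]
  simp only [uc_coe, norm_mul, norm_inv]
  rw [abs_e, abs_e]
  have h1 : ‖e s + e τ‖ ≤ 2 := by
    calc ‖e s + e τ‖ ≤ ‖e s‖ + ‖e τ‖ := norm_add_le _ _
    _ ≤ 2 := by rw [abs_e, abs_e]; norm_num
  have h2 : ‖e τ + 1‖ ≤ 2 := by
    calc ‖e τ + 1‖ ≤ ‖e τ‖ + ‖(1:ℂ)‖ := norm_add_le _ _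
    _ ≤ 2 := by rw [abs_e]; norm_num
  have h3 : ‖1 + e s‖ ≤ 2 := by
    calc ‖1 + e s‖ ≤ ‖(1:ℂ)‖ + ‖e s‖ := norm_add_le _ _
    _ ≤ 2 := by rw [abs_e]; norm_num
  calc ‖e s + e τ‖ * ‖e τ + 1‖ * ‖1 + e s‖ * (1 * 1)⁻¹
      ≤ 2 * 2 * 2 * (1*1)⁻¹ := by
        gcongr
    _ = 8 := by norm_num
lemma integral_e_zpow (n : ℤ) : (∫ s in (0:ℝ)..1, (e s) ^ n) = if n = 0 then 1 else 0 := by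
  rcases eq_or_ne n 0 with rfl | hn
  · simp
  · rw [if_neg hn]
    have h : ∀ s : ℝ, (e s) ^ n = Complex.exp ((2 * Real.pi * Complex.I * n) * s) := by
      intro s
      rw [e, show ((2 * Real.pi * Complex.I * n) * s : ℂ)
        = n * (2 * Real.pi * Complex.I * s) by ring, Complex.exp_int_mul]
    simp_rw [h]
    have hc : (2 * (Real.pi:ℂ) * Complex.I * n) ≠ 0 := by
      simp [Real.pi_ne_zero, Complex.I_ne_zero, hn]
    rw [integral_exp_mul_complex hc]
    have h1 : Complex.exp (2 * (Real.pi:ℂ) * Complex.I * n * ((1:ℝ):ℂ)) = 1 := by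
      push_cast
      rw [mul_one, show (2 * (Real.pi:ℂ) * Complex.I * n) = n * (2 * Real.pi * Complex.I) by ring]
      exact Complex.exp_int_mul_two_pi_mul_I n
    rw [h1]
    simp

lemma cont_e_zpow (n : ℤ) : Continuous fun s : ℝ => (e s) ^ n :=
  continuous_e.zpow₀ n (fun x => Or.inl (e_ne_zero x))

lemma integral_integral_ev (p : AddMonoidAlgebra ℂ (ℤ × ℤ)) :
    (∫ s in (0:ℝ)..1, ∫ τ in (0:ℝ)..1, ev (uc s) (uc τ) p) = p.coeff 0 := by
  have hev : ∀ s τ : ℝ, ev (uc s) (uc τ) p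
      = ∑ m ∈ p.coeff.support, p.coeff m * (e s) ^ m.1 * (e τ) ^ m.2 := by
    intro s τ
    conv_lhs => rw [← AddMonoidAlgebra.sum_coeff_single p]
    rw [Finsupp.sum, map_sum]
    exact Finset.sum_congr rfl fun m _ => by rw [ev_single]; simp
  have hinner : ∀ s : ℝ, (∫ τ in (0:ℝ)..1, ev (uc s) (uc τ) p)
      = ∑ m ∈ p.coeff.support, p.coeff m * (e s) ^ m.1 * (if m.2 = 0 then (1:ℂ) else 0) := by
    intro s
    simp_rw [hev]
    rw [intervalIntegral.integral_finset_sum]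
    · exact Finset.sum_congr rfl fun m _ => by
        rw [intervalIntegral.integral_const_mul, integral_e_zpow]
    · intro m _
      exact (continuous_const.mul (cont_e_zpow m.2)).intervalIntegrable _ _
  calc (∫ s in (0:ℝ)..1, ∫ τ in (0:ℝ)..1, ev (uc s) (uc τ) p)
      = ∫ s in (0:ℝ)..1, ∑ m ∈ p.coeff.support,
          p.coeff m * (e s) ^ m.1 * (if m.2 = 0 then (1:ℂ) else 0) := by
        exact intervalIntegral.integral_congr fun s _ => hinner s
    _ = ∑ m ∈ p.coeff.support,
          p.coeff m * (if m.1 = 0 then (1:ℂ) else 0) * (if m.2 = 0 then (1:ℂ) else 0) := by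
        rw [intervalIntegral.integral_finset_sum]
        · refine Finset.sum_congr rfl fun m _ => ?_
          rw [intervalIntegral.integral_mul_const, intervalIntegral.integral_const_mul,
            integral_e_zpow]
        · intro m _
          exact ((continuous_const.mul (cont_e_zpow m.1)).mul continuous_const).intervalIntegrable _ _
    _ = ∑ m ∈ p.coeff.support, (if m = 0 then p.coeff m else 0) := by
        refine Finset.sum_congr rfl fun m _ => ?_
        by_cases h1 : m.1 = 0 <;> by_cases h2 : m.2 = 0 <;>
          simp [h1, h2, Prod.ext_iff, show ((0:ℤ×ℤ)).1 = 0 from rfl]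
    _ = p.coeff 0 := by
        rw [Finset.sum_ite_eq' p.coeff.support (0 : ℤ × ℤ) (fun m => p.coeff m)]
        by_cases h : (0 : ℤ × ℤ) ∈ p.coeff.support
        · rw [if_pos h]
        · rw [if_neg h]
          exact (Finsupp.notMem_support_iff.mp h).symm
noncomputable def aCoeff (k : ℕ) : ℂ := (Gpoly ^ k).coeff (0, 0)

noncomputable def g (s τ : ℝ) : ℂ := ev (uc s) (uc τ) Gpoly

lemma g_eq (s τ : ℝ) : g s τ = (e s + e τ) * (e τ + 1) * (1 + e s) * (e s * e τ)⁻¹ := by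
  simpa [g] using ev_Gpoly (uc s) (uc τ)

lemma abs_g_le (s τ : ℝ) : ‖g s τ‖ ≤ 8 := abs_ev_Gpoly_le s τ

lemma continuous_g : Continuous fun p : ℝ × ℝ => g p.1 p.2 := by
  have : ∀ p : ℝ × ℝ, g p.1 p.2 = (e p.1 + e p.2) * (e p.2 + 1) * (1 + e p.1)
      * (e p.1 * e p.2)⁻¹ := fun p => g_eq p.1 p.2
  simp_rw [this]
  refine Continuous.mul (by fun_prop) (Continuous.inv₀ (by fun_prop) ?_)
  intro p
  exact mul_ne_zero (e_ne_zero _) (e_ne_zero _)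

lemma integral_integral_g_pow (n : ℕ) :
    (∫ s in (0:ℝ)..1, ∫ τ in (0:ℝ)..1, (g s τ) ^ n) = aCoeff n := by
  have h : ∀ s τ : ℝ, (g s τ) ^ n = ev (uc s) (uc τ) (Gpoly ^ n) := fun s τ =>
    (map_pow (ev (uc s) (uc τ)) Gpoly n).symm
  simp_rw [h]
  rw [integral_integral_ev]
  rfl

lemma abs_aCoeff_le (n : ℕ) : ‖aCoeff n‖ ≤ 8 ^ n := by
  rw [← integral_integral_g_pow]
  have h8 : (0:ℝ) ≤ 8 ^ n := by positivity
  calc ‖∫ s in (0:ℝ)..1, ∫ τ in (0:ℝ)..1, (g s τ) ^ n‖ ≤ 8 ^ n * |(1:ℝ) - 0| := by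
        refine intervalIntegral.norm_integral_le_of_norm_le_const fun s _ => ?_
        calc ‖∫ τ in (0:ℝ)..1, (g s τ) ^ n‖ ≤ 8 ^ n * |(1:ℝ) - 0| := by
              refine intervalIntegral.norm_integral_le_of_norm_le_const fun τ _ => ?_
              rw [norm_pow]
              exact pow_le_pow_left₀ (norm_nonneg _) (abs_g_le s τ) n
          _ = 8 ^ n := by norm_num
    _ = 8 ^ n := by norm_num
attribute [irreducible] g ev Gpoly

section main

variable {t : ℂ} (ht : 8 < ‖t‖)

/-- The summand `Re((g/t)^(k+1)/(k+1))`. -/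
noncomputable def fk (t : ℂ) (k : ℕ) (s τ : ℝ) : ℝ :=
  ((g s τ / t) ^ (k + 1) / ((k : ℂ) + 1)).re

/-- `Q = log|t| - log|F|`. -/
noncomputable def Q (t : ℂ) (s τ : ℝ) : ℝ :=
  Real.log (‖t‖) -
    Real.log (‖(e s + e τ) * (e τ + 1) * (1 + e s) - t * (e s * e τ)‖)

include ht

lemma ht0 : t ≠ 0 := by
  intro h; rw [h] at ht; simp at ht; linarith

lemma abs_w_lt (s τ : ℝ) : ‖g s τ / t‖ ≤ 8 / ‖t‖ := by
  rw [norm_div]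
  have hpos : (0:ℝ) < ‖t‖ := norm_pos_iff.mpr (ht0 ht)
  exact (div_le_div_iff_of_pos_right hpos).mpr (abs_g_le s τ)

lemma r_lt_one : 8 / ‖t‖ < 1 := by
  rw [div_lt_one (by linarith : (0:ℝ) < ‖t‖)]; exact ht

lemma one_sub_w_ne (s τ : ℝ) : 1 - g s τ / t ≠ 0 := by
  intro h
  have h1 : g s τ / t = 1 := by linear_combination -h
  have := abs_w_lt ht s τ
  rw [h1] at this
  simp at this
  have := r_lt_one ht
  linarith

lemma F_factor (s τ : ℝ) :
    (e s + e τ) * (e τ + 1) * (1 + e s) - t * (e s * e τ)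
      = (-t * (e s * e τ)) * (1 - g s τ / t) := by
  rw [g_eq]
  have h1 : e s ≠ 0 := e_ne_zero s
  have h2 : e τ ≠ 0 := e_ne_zero τ
  have h3 : t ≠ 0 := ht0 ht
  field_simp
  ring

lemma abs_F (s τ : ℝ) :
    ‖(e s + e τ) * (e τ + 1) * (1 + e s) - t * (e s * e τ)‖
      = ‖t‖ * ‖1 - g s τ / t‖ := by
  rw [F_factor ht, norm_mul, norm_mul, norm_mul, norm_neg, abs_e, abs_e]
  ring

lemma Q_eq (s τ : ℝ) : Q t s τ = -Real.log (‖1 - g s τ / t‖) := by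
  rw [Q, abs_F ht, Real.log_mul (by positivity : ‖t‖ ≠ 0)
    (norm_ne_zero_iff.mpr (one_sub_w_ne ht s τ))]
  ring

lemma hasSum_fk (s τ : ℝ) : HasSum (fun k => fk t k s τ) (Q t s τ) := by
  set w := g s τ / t with hw
  have hwlt : ‖w‖ < 1 := by
    exact lt_of_le_of_lt (abs_w_lt ht s τ) (r_lt_one ht)
  have h0 : HasSum (fun n : ℕ => w ^ n / (n : ℂ)) (-Complex.log (1 - w)) :=
    Complex.hasSum_taylorSeries_neg_log hwlt
  have h1 : HasSum (fun n : ℕ => w ^ (n + 1) / ((n : ℂ) + 1)) (-Complex.log (1 - w)) := by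
    have := (hasSum_nat_add_iff (f := fun n : ℕ => w ^ n / (n : ℂ)) 1).mpr (by simpa using h0)
    convert this using 2 with n
    case e'_3 => rfl
    push_cast
    ring_nf
  have h2 := Complex.hasSum_re h1
  have h3 : (-Complex.log (1 - w)).re = Q t s τ := by
    rw [Complex.neg_re, Complex.log_re, Q_eq ht, Complex.norm_def]
  rwa [h3] at h2

lemma abs_fk_le (k : ℕ) (s τ : ℝ) : ‖fk t k s τ‖ ≤ (8 / ‖t‖) ^ (k + 1) := by
  have h1 : ‖fk t k s τ‖ ≤ ‖(g s τ / t) ^ (k + 1) / ((k : ℂ) + 1)‖ :=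
    Complex.abs_re_le_norm _
  refine h1.trans ?_
  rw [norm_div, norm_pow]
  have hk : (1:ℝ) ≤ ‖((k : ℂ) + 1)‖ := by
    rw [show ((k:ℂ)+1) = ((k+1 : ℕ) : ℂ) by push_cast; ring, Complex.norm_natCast]
    exact_mod_cast Nat.one_le_iff_ne_zero.mpr (Nat.succ_ne_zero k)
  calc ‖g s τ / t‖ ^ (k+1) / ‖((k:ℂ)+1)‖ ≤ ‖g s τ / t‖ ^ (k+1) / 1 := by
        gcongr
    _ = ‖g s τ / t‖ ^ (k+1) := by ring
    _ ≤ (8 / ‖t‖) ^ (k+1) := by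
        gcongr
        exact abs_w_lt ht s τ

lemma summable_bound : Summable (fun k : ℕ => (8 / ‖t‖) ^ (k + 1)) := by
  apply Summable.comp_injective ?_ (add_left_injective 1)
  · exact summable_geometric_of_lt_one (by positivity) (r_lt_one ht)

end main
section main2

variable {t : ℂ} (ht : 8 < ‖t‖)

lemma cont_fk (k : ℕ) : Continuous fun p : ℝ × ℝ => fk t k p.1 p.2 := by
  unfold fk
  exact Complex.continuous_re.comp
    ((((continuous_g.div_const t).pow (k+1)).div_const _))

include ht

lemma F_ne (s τ : ℝ) :
    (e s + e τ) * (e τ + 1) * (1 + e s) - t * (e s * e τ) ≠ 0 := by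
  intro h
  have h2 := abs_F ht s τ
  rw [h] at h2
  simp only [norm_zero] at h2
  have h3 : ‖t‖ ≠ 0 := by positivity
  have h4 : ‖1 - g s τ / t‖ ≠ 0 := norm_ne_zero_iff.mpr (one_sub_w_ne ht s τ)
  exact (mul_ne_zero h3 h4) h2.symm

lemma cont_Q : Continuous fun p : ℝ × ℝ => Q t p.1 p.2 := by
  unfold Q
  refine continuous_const.sub (Continuous.log ?_ ?_)
  · exact continuous_norm.comp (by fun_prop)
  · intro p
    exact norm_ne_zero_iff.mpr (F_ne ht p.1 p.2)

lemma integral_fk (k : ℕ) :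
    (∫ s in (0:ℝ)..1, ∫ τ in (0:ℝ)..1, fk t k s τ)
      = ((1 / ((k : ℂ) + 1)) * aCoeff (k + 1) * t ^ (-((k : ℤ) + 1))).re := by
  set c : ℂ := (1 / ((k : ℂ) + 1)) * t ^ (-((k : ℤ) + 1)) with hc
  have htz : t ≠ 0 := ht0 ht
  have hkz : ((k : ℂ) + 1) ≠ 0 := by
    exact_mod_cast Nat.cast_add_one_ne_zero (R := ℂ) k
  have hfk : ∀ s τ : ℝ, fk t k s τ = Complex.reCLM (c * (g s τ) ^ (k + 1)) := by
    intro s τ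
    unfold fk
    congr 1
    rw [hc]
    rw [div_pow, zpow_neg, show ((k : ℤ) + 1) = ((k + 1 : ℕ) : ℤ) by push_cast; ring,
      zpow_natCast]
    field_simp
  have hcont1 : ∀ s : ℝ, Continuous fun τ : ℝ => c * (g s τ) ^ (k + 1) := by
    intro s
    have : Continuous fun τ : ℝ => g s τ :=
      continuous_g.comp (Continuous.prodMk_right s)
    exact continuous_const.mul (this.pow _)
  have hcont2 : Continuous fun s : ℝ => ∫ τ in (0:ℝ)..1, c * (g s τ) ^ (k + 1) := by
    apply intervalIntegral.continuous_parametric_intervalIntegral_of_continuous'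
      (f := fun s τ : ℝ => c * (g s τ) ^ (k + 1))
    exact continuous_const.mul ((continuous_g.pow _))
  calc (∫ s in (0:ℝ)..1, ∫ τ in (0:ℝ)..1, fk t k s τ)
      = ∫ s in (0:ℝ)..1, Complex.reCLM (∫ τ in (0:ℝ)..1, c * (g s τ) ^ (k + 1)) := by
        refine intervalIntegral.integral_congr fun s _ => ?_
        simp_rw [hfk]
        exact Complex.reCLM.intervalIntegral_comp_comm ((hcont1 s).intervalIntegrable _ _)
    _ = Complex.reCLM (∫ s in (0:ℝ)..1, ∫ τ in (0:ℝ)..1, c * (g s τ) ^ (k + 1)) :=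
        Complex.reCLM.intervalIntegral_comp_comm (hcont2.intervalIntegrable _ _)
    _ = ((1 / ((k : ℂ) + 1)) * aCoeff (k + 1) * t ^ (-((k : ℤ) + 1))).re := by
        simp_rw [intervalIntegral.integral_const_mul, integral_integral_g_pow]
        show (c * aCoeff (k+1)).re = _
        congr 1
        rw [hc]; ring

lemma hasSum_integral_Q :
    HasSum (fun k : ℕ => ((1 / ((k : ℂ) + 1)) * aCoeff (k + 1) * t ^ (-((k : ℤ) + 1))).re)
      (∫ s in (0:ℝ)..1, ∫ τ in (0:ℝ)..1, Q t s τ) := by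
  have hlim : ∀ s : ℝ, HasSum (fun k : ℕ => ∫ τ in (0:ℝ)..1, fk t k s τ)
      (∫ τ in (0:ℝ)..1, Q t s τ) := by
    intro s
    apply intervalIntegral.hasSum_integral_of_dominated_convergence
      (bound := fun k _ => (8 / ‖t‖) ^ (k + 1))
    · intro k
      exact ((cont_fk k).comp (Continuous.prodMk_right s)).aestronglyMeasurable
    · intro k
      filter_upwards with τ _
      exact abs_fk_le ht k s τ
    · filter_upwards with τ _
      exact summable_bound ht
    · exact intervalIntegrable_const
    · filter_upwards with τ _
      exact hasSum_fk ht s τ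
  have h := intervalIntegral.hasSum_integral_of_dominated_convergence
      (μ := MeasureTheory.volume) (a := (0:ℝ)) (b := 1)
      (F := fun k s => ∫ τ in (0:ℝ)..1, fk t k s τ)
      (f := fun s => ∫ τ in (0:ℝ)..1, Q t s τ)
      (bound := fun k _ => (8 / ‖t‖) ^ (k + 1)) ?_ ?_ ?_ ?_ ?_
  · have heq : ∀ k : ℕ, (∫ s in (0:ℝ)..1, ∫ τ in (0:ℝ)..1, fk t k s τ)
        = ((1 / ((k : ℂ) + 1)) * aCoeff (k + 1) * t ^ (-((k : ℤ) + 1))).re := integral_fk ht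
    simpa [heq] using h
  · intro k
    have : Continuous fun s : ℝ => ∫ τ in (0:ℝ)..1, fk t k s τ := by
      apply intervalIntegral.continuous_parametric_intervalIntegral_of_continuous'
        (f := fun s τ : ℝ => fk t k s τ)
      exact cont_fk k
    exact this.aestronglyMeasurable
  · intro k
    filter_upwards with s _
    calc ‖∫ τ in (0:ℝ)..1, fk t k s τ‖ ≤ (8 / ‖t‖) ^ (k + 1) * |(1:ℝ) - 0| :=
          intervalIntegral.norm_integral_le_of_norm_le_const fun τ _ => abs_fk_le ht k s τ
      _ = (8 / ‖t‖) ^ (k + 1) := by norm_num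
  · filter_upwards with s _
    exact summable_bound ht
  · exact intervalIntegrable_const
  · filter_upwards with s _
    exact hlim s

lemma summable_main :
    Summable (fun k : ℕ => (1 / ((k : ℂ) + 1)) * aCoeff (k + 1) * t ^ (-((k : ℤ) + 1))) := by
  apply Summable.of_norm_bounded (summable_bound ht)
  intro k
  have h1 : ‖(1 / ((k : ℂ) + 1))‖ ≤ 1 := by
    rw [norm_div, norm_one, show ((k:ℂ)+1) = ((k+1 : ℕ) : ℂ) by push_cast; ring,
      Complex.norm_natCast]
    rw [div_le_one (by exact_mod_cast Nat.succ_pos k)]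
    exact_mod_cast Nat.one_le_iff_ne_zero.mpr (Nat.succ_ne_zero k)
  have h2 : ‖aCoeff (k + 1)‖ ≤ 8 ^ (k + 1) := by
    exact abs_aCoeff_le (k + 1)
  have h3 : ‖t ^ (-((k : ℤ) + 1))‖ = (‖t‖ ^ (k + 1))⁻¹ := by
    rw [norm_zpow, zpow_neg, show ((k : ℤ) + 1) = ((k + 1 : ℕ) : ℤ) by push_cast; ring,
      zpow_natCast]
  calc ‖(1 / ((k : ℂ) + 1)) * aCoeff (k + 1) * t ^ (-((k : ℤ) + 1))‖
      = ‖(1 / ((k : ℂ) + 1))‖ * ‖aCoeff (k + 1)‖ * ‖t ^ (-((k : ℤ) + 1))‖ := by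
        rw [norm_mul, norm_mul]
    _ ≤ 1 * 8 ^ (k + 1) * (‖t‖ ^ (k + 1))⁻¹ := by
        rw [h3]
        gcongr
    _ = (8 / ‖t‖) ^ (k + 1) := by
        rw [div_pow]; ring

end main2
/-- for `|t| > 8`,
`m((x+y)(y+1)(1+x) − t·xy) = log|t| − ∑_{k≥1} (1/k) a_k t^{-k}`,
where `a_k` is the constant term of `((x+y)(y+1)(1+x)(xy)⁻¹)^k`. -/
theorem logMahler_expansion (t : ℂ) (ht : 8 < ‖t‖) :
    logMahler (fun x y => (x + y) * (y + 1) * (1 + x) - t * (x * y)) =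
      Real.log (‖t‖) -
        (∑' k : ℕ, (1 / ((k : ℂ) + 1)) * aCoeff (k + 1) * t ^ (-((k : ℤ) + 1))).re := by
  have hQint : ∀ s : ℝ, IntervalIntegrable (fun τ => Q t s τ) MeasureTheory.volume 0 1 := by
    intro s
    exact ((cont_Q ht).comp (Continuous.prodMk_right s)).intervalIntegrable _ _
  have hQint2 : Continuous fun s : ℝ => ∫ τ in (0:ℝ)..1, Q t s τ := by
    apply intervalIntegral.continuous_parametric_intervalIntegral_of_continuous'
      (f := fun s τ : ℝ => Q t s τ)
    exact cont_Q ht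
  have hpt : ∀ s τ : ℝ,
      Real.log (‖(e s + e τ) * (e τ + 1) * (1 + e s) - t * (e s * e τ)‖)
        = Real.log (‖t‖) - Q t s τ := by
    intro s τ
    rw [Q]
    ring
  have hinner : ∀ s : ℝ,
      (∫ τ in (0:ℝ)..1,
        Real.log (‖(e s + e τ) * (e τ + 1) * (1 + e s) - t * (e s * e τ)‖))
        = Real.log (‖t‖) - ∫ τ in (0:ℝ)..1, Q t s τ := by
    intro s
    rw [show (fun τ : ℝ =>
        Real.log (‖(e s + e τ) * (e τ + 1) * (1 + e s) - t * (e s * e τ)‖))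
      = fun τ : ℝ => Real.log (‖t‖) - Q t s τ from funext fun τ => hpt s τ]
    rw [intervalIntegral.integral_sub intervalIntegrable_const (hQint s)]
    simp
  have hQval : (∫ s in (0:ℝ)..1, ∫ τ in (0:ℝ)..1, Q t s τ)
      = (∑' k : ℕ, (1 / ((k : ℂ) + 1)) * aCoeff (k + 1) * t ^ (-((k : ℤ) + 1))).re := by
    rw [Complex.re_tsum (summable_main ht)]
    exact ((hasSum_integral_Q ht).tsum_eq).symm
  calc logMahler (fun x y => (x + y) * (y + 1) * (1 + x) - t * (x * y))
      = ∫ s in (0:ℝ)..1, (Real.log (‖t‖) - ∫ τ in (0:ℝ)..1, Q t s τ) := by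
        unfold logMahler
        exact intervalIntegral.integral_congr fun s _ => hinner s
    _ = Real.log (‖t‖) - ∫ s in (0:ℝ)..1, ∫ τ in (0:ℝ)..1, Q t s τ := by
        rw [intervalIntegral.integral_sub intervalIntegrable_const
          (hQint2.intervalIntegrable _ _)]
        simp
    _ = Real.log (‖t‖) -
        (∑' k : ℕ, (1 / ((k : ℂ) + 1)) * aCoeff (k + 1) * t ^ (-((k : ℤ) + 1))).re := by
        rw [hQval]
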